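/- Let E ∪_m F be an adjunction topological graph such that G⁰ is negatively invariant in F⁰ and m : G → E satisfies condition (F3). Then the following are equivalent: (1) E⁰ is negatively invariant in (E ∪_m F)⁰; (2) the canonical pair p = (p¹, p⁰) satisfies condition (F3), i.e., p⁰(F⁰_sing) ⊆ (E ∪_m F)⁰_sing. -/

import Mathlib

open Set Topology

/-- A continuous map which is proper: preimages of compact sets are compact. -/
def ProperCont {X Y : Type*} [TopologicalSpace X] [TopologicalSpace Y] (f : X → Y) : Prop :=
  Continuous f ∧ ∀ K : Set Y, IsCompact K → IsCompact (f ⁻¹' K)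

/-- The raw data of a (topological) graph: a source and a range map from edges to vertices. -/
structure GraphData (V E : Type*) where
  s : E → V
  r : E → V

/-- `g` is a topological graph: source and range are continuous and the range map is a
local homeomorphism. -/
structure IsTopGraph {V E : Type*} [TopologicalSpace V] [TopologicalSpace E]
    (g : GraphData V E) : Prop where
  s_cont : Continuous g.s
  r_cont : Continuous g.r
  r_locHomeo : IsLocalHomeomorph g.r

namespace GraphData

variable {V E : Type*} [TopologicalSpace V] [TopologicalSpace E]

/-- `E⁰_fin`: vertices having a neighborhood whose preimage under the source map is compact. -/
def finSet (g : GraphData V E) : Set V := {v | ∃ U ∈ nhds v, IsCompact (g.s ⁻¹' U)}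

/-- `E⁰_sink = E⁰ \ closure (s(E¹))`. -/
def sinkSet (g : GraphData V E) : Set V := (closure (Set.range g.s))ᶜ

/-- `E⁰_reg = E⁰_fin \ closure (E⁰_sink)`. -/
def regSet (g : GraphData V E) : Set V := g.finSet \ closure g.sinkSet

/-- `E⁰_sing = E⁰ \ E⁰_reg`. -/
def singSet (g : GraphData V E) : Set V := (g.regSet)ᶜ

/-- A set of vertices is negatively invariant if every regular vertex in it emits an
edge whose range lies in it. -/
def NegInvariant (g : GraphData V E) (Y : Set V) : Prop :=
  ∀ v ∈ Y ∩ g.regSet, ∃ e, g.s e = v ∧ g.r e ∈ Y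

/-- A topological graph is row-finite if `s(E¹) = E⁰_reg`. -/
def RowFinite (g : GraphData V E) : Prop := Set.range g.s = g.regSet

/-- The restriction of a graph to a pair of subsets of vertices and edges. -/
def restrict (g : GraphData V E) (G0 : Set V) (G1 : Set E)
    (hs : Set.MapsTo g.s G1 G0) (hr : Set.MapsTo g.r G1 G0) : GraphData G0 G1 where
  s := fun e => ⟨g.s e, hs e.2⟩
  r := fun e => ⟨g.r e, hr e.2⟩

end GraphData

/-- `(G0, G1)` determines a closed subgraph of `g` (in particular it is itself
a topological graph with the restricted source and range maps). -/
structure IsClosedSubgraph {V E : Type*} [TopologicalSpace V] [TopologicalSpace E]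
    (g : GraphData V E) (G0 : Set V) (G1 : Set E) : Prop where
  s_maps : Set.MapsTo g.s G1 G0
  r_maps : Set.MapsTo g.r G1 G0
  closed0 : IsClosed G0
  closed1 : IsClosed G1
  isGraph : IsTopGraph (g.restrict G0 G1 s_maps r_maps)

/-- A regular closed subgraph: a closed subgraph whose vertex set is negatively invariant
and such that `r⁻¹(G⁰) ⊆ G¹`. -/
structure IsRegularClosedSubgraph {V E : Type*} [TopologicalSpace V] [TopologicalSpace E]
    (g : GraphData V E) (G0 : Set V) (G1 : Set E) extends IsClosedSubgraph g G0 G1 : Prop where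
  negInv : g.NegInvariant G0
  r_pre : g.r ⁻¹' G0 ⊆ G1

/-- A regular factor map `(m¹, m⁰) : gG → gF` between topological graphs: a pair of proper
continuous maps satisfying (F1), (F2) and (F3). -/
structure IsRegularFactorMap {V1 E1 V2 E2 : Type*}
    [TopologicalSpace V1] [TopologicalSpace E1] [TopologicalSpace V2] [TopologicalSpace E2]
    (gG : GraphData V1 E1) (gF : GraphData V2 E2) (m0 : V1 → V2) (m1 : E1 → E2) : Prop where
  proper0 : ProperCont m0
  proper1 : ProperCont m1
  F1r : ∀ e, gF.r (m1 e) = m0 (gG.r e)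
  F1s : ∀ e, gF.s (m1 e) = m0 (gG.s e)
  F2 : ∀ (x : E2) (v : V1), gF.r x = m0 v → ∃! e : E1, m1 e = x ∧ gG.r e = v
  F3 : m0 '' gG.singSet ⊆ gF.singSet

section Adjunction

/-- The relation generating the adjunction-space identification: `a ∈ A ⊆ Y` is glued
to `f a ∈ X`. -/
inductive AdjRel {X Y : Type*} {A : Set Y} (f : A → X) : X ⊕ Y → X ⊕ Y → Prop
  | glue (a : A) : AdjRel f (Sum.inl (f a)) (Sum.inr a.1)

/-- The adjunction space `X ∪_f Y`. -/
def AdjSpace {X Y : Type*} {A : Set Y} (f : A → X) : Type _ := Quot (AdjRel f)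

instance {X Y : Type*} [TopologicalSpace X] [TopologicalSpace Y] {A : Set Y} (f : A → X) :
    TopologicalSpace (AdjSpace f) :=
  inferInstanceAs (TopologicalSpace (Quot (AdjRel f)))

/-- The canonical (closed) embedding `X → X ∪_f Y`. -/
def adjInc {X Y : Type*} {A : Set Y} (f : A → X) : X → AdjSpace f :=
  fun x => Quot.mk _ (Sum.inl x)

/-- The canonical map `p : Y → X ∪_f Y`. -/
def adjP {X Y : Type*} {A : Set Y} (f : A → X) : Y → AdjSpace f :=
  fun y => Quot.mk _ (Sum.inr y)

variable {VE EE VF EF : Type*}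

/-- The source map `s_∪` of the adjunction graph `E ∪_m F`. -/
def adjS (gE : GraphData VE EE) (gF : GraphData VF EF) {G0 : Set VF} {G1 : Set EF}
    (m0 : G0 → VE) (m1 : G1 → EE) (hs : Set.MapsTo gF.s G1 G0)
    (hF1s : ∀ e : G1, gE.s (m1 e) = m0 ⟨gF.s e, hs e.2⟩) :
    AdjSpace m1 → AdjSpace m0 :=
  Quot.lift
    (fun x => match x with
      | Sum.inl e => adjInc m0 (gE.s e)
      | Sum.inr e => adjP m0 (gF.s e))
    (by
      rintro _ _ ⟨a⟩
      show adjInc m0 (gE.s (m1 a)) = adjP m0 (gF.s a.1)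
      rw [hF1s a]
      exact Quot.sound (AdjRel.glue ⟨gF.s a.1, hs a.2⟩))

/-- The range map `r_∪` of the adjunction graph `E ∪_m F`. -/
def adjR (gE : GraphData VE EE) (gF : GraphData VF EF) {G0 : Set VF} {G1 : Set EF}
    (m0 : G0 → VE) (m1 : G1 → EE) (hr : Set.MapsTo gF.r G1 G0)
    (hF1r : ∀ e : G1, gE.r (m1 e) = m0 ⟨gF.r e, hr e.2⟩) :
    AdjSpace m1 → AdjSpace m0 :=
  Quot.lift
    (fun x => match x with
      | Sum.inl e => adjInc m0 (gE.r e)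
      | Sum.inr e => adjP m0 (gF.r e))
    (by
      rintro _ _ ⟨a⟩
      show adjInc m0 (gE.r (m1 a)) = adjP m0 (gF.r a.1)
      rw [hF1r a]
      exact Quot.sound (AdjRel.glue ⟨gF.r a.1, hr a.2⟩))

/-- The adjunction graph `E ∪_m F`, obtained by attaching the topological graph `F` to the
topological graph `E` along a closed subgraph `(G0, G1)` of `F` via the pair `(m¹, m⁰)`. -/
def adjGraph (gE : GraphData VE EE) (gF : GraphData VF EF) {G0 : Set VF} {G1 : Set EF}
    (m0 : G0 → VE) (m1 : G1 → EE)
    (hs : Set.MapsTo gF.s G1 G0) (hr : Set.MapsTo gF.r G1 G0)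
    (hF1s : ∀ e : G1, gE.s (m1 e) = m0 ⟨gF.s e, hs e.2⟩)
    (hF1r : ∀ e : G1, gE.r (m1 e) = m0 ⟨gF.r e, hr e.2⟩) :
    GraphData (AdjSpace m0) (AdjSpace m1) where
  s := adjS gE gF m0 m1 hs hF1s
  r := adjR gE gF m0 m1 hr hF1r

end Adjunction

/-!
Write `ι : E⁰ → (E ∪_m F)⁰` and `p⁰ : F⁰ → (E ∪_m F)⁰` for the canonical maps. Because `G⁰, G¹`
are closed and `m⁰, m¹` are proper, `ι` is a closed embedding and `p` is proper on vertices and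
on edges. Hence a vertex of `E` or `F` that is finite in the union is finite in its own graph,
and the closure of `s_∪(E¹ ∪ F¹)` is `ι(closure s_E(E¹)) ∪ p⁰(closure s_F(F¹))`.

An edge of `F` ending in `G⁰` lies in `G¹` and is glued to an edge of `E`, so negative invariance
of `E⁰` just says that every `x ∈ E⁰` with `ι x` regular is a source in `E`. Then `x` is even
regular in `E`, having a neighbourhood of sources. Now if `y ∈ F⁰_sing` had `p⁰ y` regular, `y`
would be finite, hence a limit of sinks of `F`: sinks outside `G⁰` stay sinks of the union, and
sinks inside `G⁰` are sent by `m⁰` into the closed set `E⁰_sing` by (F3) for `m`; either way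
`p⁰ y` would not be regular.

Conversely, assume (F3) for `p` and let `ι x` be regular. If `x = m⁰ y`, then `y` is regular in
`F`, so it emits an edge into `G⁰`, which is glued to an edge of `E` with source `x`. Otherwise
`x` lies in the closure of `s_E(E¹)` and is finite, hence a source: near `x` the sources form
the compact, hence closed, set `s_E(s_E⁻¹ U)`.
-/

theorem ProperCont.isProperMap {X Y : Type*} [TopologicalSpace X] [TopologicalSpace Y]
    [T2Space Y] [LocallyCompactSpace Y] {f : X → Y} (hf : ProperCont f) : IsProperMap f :=
  isProperMap_iff_isCompact_preimage.2 ⟨hf.1, fun _ => hf.2 _⟩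

namespace AdjSpace

variable {X Y : Type*} {A : Set Y} (f : A → X)

-- A normal form for the points of `X ∪_f Y`; equalities in the quotient are decided through it.
open scoped Classical in
noncomputable def rep : AdjSpace f → X ⊕ Y :=
  Quot.lift (fun z => match z with
      | .inl x => .inl x
      | .inr y => if h : y ∈ A then .inl (f ⟨y, h⟩) else .inr y)
    (by rintro _ _ ⟨a⟩; simp)

theorem rep_adjInc (x : X) : rep f (adjInc f x) = .inl x := rfl

theorem rep_adjP_of_mem {y : Y} (h : y ∈ A) : rep f (adjP f y) = .inl (f ⟨y, h⟩) := dif_pos h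

theorem rep_adjP_of_notMem {y : Y} (h : y ∉ A) : rep f (adjP f y) = .inr y := dif_neg h

theorem adjInc_injective : Function.Injective (adjInc f) :=
  fun _ _ h => Sum.inl_injective (congrArg (rep f) h)

theorem adjP_of_mem {y : Y} (h : y ∈ A) : adjP f y = adjInc f (f ⟨y, h⟩) :=
  (Quot.sound (AdjRel.glue ⟨y, h⟩)).symm

theorem adjP_eq_adjInc_iff {y : Y} {x : X} :
    adjP f y = adjInc f x ↔ ∃ h : y ∈ A, f ⟨y, h⟩ = x := by
  refine ⟨fun hyx => ?_, fun ⟨h, hx⟩ => hx ▸ adjP_of_mem f h⟩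
  have := congrArg (rep f) hyx
  by_cases h : y ∈ A
  · rw [rep_adjP_of_mem f h, rep_adjInc] at this
    exact ⟨h, Sum.inl_injective this⟩
  · rw [rep_adjP_of_notMem f h, rep_adjInc] at this
    simp at this

theorem adjP_eq_adjP_of_notMem {y y' : Y} (hy : y ∉ A) (h : adjP f y' = adjP f y) : y' = y := by
  have := congrArg (rep f) h
  rw [rep_adjP_of_notMem f hy] at this
  by_cases h' : y' ∈ A
  · rw [rep_adjP_of_mem f h'] at this
    simp at this
  · rw [rep_adjP_of_notMem f h'] at this
    exact Sum.inr_injective this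

@[elab_as_elim]
theorem induction_on {motive : AdjSpace f → Prop} (z : AdjSpace f)
    (inc : ∀ x, motive (adjInc f x)) (p : ∀ y, motive (adjP f y)) : motive z :=
  Quot.ind (fun w => match w with
    | .inl x => inc x
    | .inr y => p y) z

theorem preimage_adjP_image_adjInc (C : Set X) :
    adjP f ⁻¹' (adjInc f '' C) = Subtype.val '' (f ⁻¹' C) := by
  ext y
  simp only [mem_preimage, mem_image, eq_comm (b := adjP f y), adjP_eq_adjInc_iff]
  grind

theorem preimage_adjInc_image_adjP (C : Set Y) :
    adjInc f ⁻¹' (adjP f '' C) = f '' (Subtype.val ⁻¹' C) := by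
  ext x
  simp only [mem_preimage, mem_image, adjP_eq_adjInc_iff]
  grind

theorem preimage_adjP_image_adjP (C : Set Y) :
    adjP f ⁻¹' (adjP f '' C) =
      C ∪ Subtype.val '' (f ⁻¹' (f '' (Subtype.val ⁻¹' C))) := by
  ext y
  by_cases hy : y ∈ A
  · rw [mem_preimage, adjP_of_mem f hy, ← mem_preimage, preimage_adjInc_image_adjP]
    constructor
    · exact fun hyC => Or.inr ⟨⟨y, hy⟩, hyC, rfl⟩
    · rintro (hyC | ⟨a, ha, rfl⟩)
      exacts [⟨⟨y, hy⟩, hyC, rfl⟩, ha]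
  · have hC : y ∉ Subtype.val '' (f ⁻¹' (f '' (Subtype.val ⁻¹' C))) :=
      fun ⟨a, _, ha⟩ => hy (ha ▸ a.2)
    simp only [mem_preimage, mem_image, mem_union, hC, or_false]
    exact ⟨fun ⟨c, hc, hcy⟩ => adjP_eq_adjP_of_notMem f hy hcy ▸ hc,
      fun hyC => ⟨y, hyC, rfl⟩⟩

variable {f} [TopologicalSpace X] [TopologicalSpace Y]

variable (f) in
theorem continuous_adjInc : Continuous (adjInc f) := continuous_quot_mk.comp continuous_inl

variable (f) in
theorem continuous_adjP : Continuous (adjP f) := continuous_quot_mk.comp continuous_inr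

theorem isClosed_iff {S : Set (AdjSpace f)} :
    IsClosed S ↔ IsClosed (adjInc f ⁻¹' S) ∧ IsClosed (adjP f ⁻¹' S) :=
  isQuotientMap_quot_mk.isClosed_preimage.symm.trans isClosed_sum_iff

theorem isClosedEmbedding_adjInc (hA : IsClosed A) (hf : Continuous f) :
    IsClosedEmbedding (adjInc f) := by
  refine .of_continuous_injective_isClosedMap (continuous_adjInc f) (adjInc_injective f)
    fun C hC => ?_
  rw [isClosed_iff, preimage_image_eq _ (adjInc_injective f), preimage_adjP_image_adjInc]
  exact ⟨hC, hA.isClosedEmbedding_subtypeVal.isClosedMap _ (hC.preimage hf)⟩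

theorem isProperMap_adjP [T2Space X] [LocallyCompactSpace X] (hA : IsClosed A)
    (hf : ProperCont f) : IsProperMap (adjP f) := by
  have hval := hA.isClosedEmbedding_subtypeVal.isClosedMap
  refine isProperMap_iff_isClosedMap_and_compact_fibers.2
    ⟨continuous_adjP f, fun C hC => ?_, fun z => ?_⟩
  · have hfC := hf.isProperMap.isClosedMap _ (hC.preimage continuous_subtype_val)
    rw [isClosed_iff, preimage_adjInc_image_adjP, preimage_adjP_image_adjP]
    exact ⟨hfC, hC.union (hval _ (hfC.preimage hf.1))⟩
  · induction z using induction_on with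
    | inc x =>
      rw [← image_singleton, preimage_adjP_image_adjInc]
      exact (hf.2 _ isCompact_singleton).image continuous_subtype_val
    | p y =>
      rw [← image_singleton, preimage_adjP_image_adjP]
      have hfin :=
        (((subsingleton_singleton (a := y)).preimage Subtype.val_injective).image f).isCompact
      exact isCompact_singleton.union ((hf.2 _ hfin).image continuous_subtype_val)

end AdjSpace

namespace GraphData

variable {V E : Type*} [TopologicalSpace V] (g : GraphData V E)

theorem preimage_sinkSet_subset_restrict (G0 : Set V) (G1 : Set E)
    (hs : MapsTo g.s G1 G0) (hr : MapsTo g.r G1 G0) :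
    Subtype.val ⁻¹' g.sinkSet ⊆ (g.restrict G0 G1 hs hr).sinkSet := by
  intro v hv hcl
  refine hv (map_mem_closure continuous_subtype_val hcl ?_)
  rintro _ ⟨e, rfl⟩
  exact ⟨e, rfl⟩

variable [TopologicalSpace E]

theorem isOpen_finSet : IsOpen g.finSet :=
  isOpen_iff_mem_nhds.2 fun _ ⟨U, hU, hK⟩ =>
    Filter.mem_of_superset (eventually_mem_nhds_iff.2 hU) fun _ hw => ⟨U, hw, hK⟩

theorem isOpen_regSet : IsOpen g.regSet := g.isOpen_finSet.sdiff isClosed_closure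

theorem isClosed_singSet : IsClosed g.singSet := g.isOpen_regSet.isClosed_compl

theorem sinkSet_subset_singSet : g.sinkSet ⊆ g.singSet :=
  fun _ hv hreg => hreg.2 (subset_closure hv)

theorem regSet_subset_closure_range : g.regSet ⊆ closure (range g.s) :=
  fun _ hv => not_not.1 fun h => hv.2 (subset_closure h)

theorem finSet_inter_closure_range_subset [T2Space V] (hs : Continuous g.s) :
    g.finSet ∩ closure (range g.s) ⊆ range g.s := by
  rintro v ⟨⟨U, hU, hK⟩, hv⟩
  have hsU : IsClosed (g.s '' (g.s ⁻¹' U)) := (hK.image hs).isClosed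
  have hvU : v ∈ closure (range g.s ∩ interior U) :=
    isOpen_interior.closure_inter ⟨hv, mem_interior_iff_mem_nhds.2 hU⟩
  rw [image_preimage_eq_range_inter] at hsU
  exact (hsU.closure_subset
    (closure_mono (inter_subset_inter_right (range g.s) interior_subset) hvU)).1

theorem preimage_finSet_subset {V' E' : Type*} [TopologicalSpace V'] [TopologicalSpace E']
    {g' : GraphData V' E'} {φ0 : V → V'} {φ1 : E → E'} (hφ0 : Continuous φ0)
    (hφ1 : ∀ K, IsCompact K → IsCompact (φ1 ⁻¹' K))
    (hs : ∀ e, g'.s (φ1 e) = φ0 (g.s e)) :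
    φ0 ⁻¹' g'.finSet ⊆ g.finSet := by
  rintro v ⟨U, hU, hK⟩
  refine ⟨φ0 ⁻¹' U, hφ0.continuousAt.preimage_mem_nhds hU, ?_⟩
  have : g.s ⁻¹' (φ0 ⁻¹' U) = φ1 ⁻¹' (g'.s ⁻¹' U) := by ext; simp [hs]
  exact this ▸ hφ1 _ hK

end GraphData

section AdjGraph

open AdjSpace

variable {VE EE VF EF : Type*} [TopologicalSpace VE] [TopologicalSpace VF]
  {gE : GraphData VE EE} {gF : GraphData VF EF}
  {G0 : Set VF} {G1 : Set EF} {m0 : G0 → VE} {m1 : G1 → EE}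
  {hs : MapsTo gF.s G1 G0} {hr : MapsTo gF.r G1 G0}
  {hF1s : ∀ e : G1, gE.s (m1 e) = m0 ⟨gF.s e, hs e.2⟩}
  {hF1r : ∀ e : G1, gE.r (m1 e) = m0 ⟨gF.r e, hr e.2⟩}

local notation "𝒰" => adjGraph gE gF m0 m1 hs hr hF1s hF1r

theorem closure_range_adjGraph_s [T2Space VE] [LocallyCompactSpace VE] (hG0 : IsClosed G0)
    (hm0 : ProperCont m0) :
    closure (range (𝒰).s) =
      adjInc m0 '' closure (range gE.s) ∪ adjP m0 '' closure (range gF.s) := by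
  have hrange : range (𝒰).s = adjInc m0 '' range gE.s ∪ adjP m0 '' range gF.s := by
    ext v
    constructor
    · rintro ⟨ε, rfl⟩
      induction ε using induction_on with
      | inc e => exact Or.inl (mem_image_of_mem _ (mem_range_self e))
      | p e => exact Or.inr (mem_image_of_mem _ (mem_range_self e))
    · rintro (⟨_, ⟨e, rfl⟩, rfl⟩ | ⟨_, ⟨e, rfl⟩, rfl⟩)
      exacts [⟨adjInc m1 e, rfl⟩, ⟨adjP m1 e, rfl⟩]
  rw [hrange, closure_union,
    (isClosedEmbedding_adjInc hG0 hm0.1).isClosedMap.closure_image_eq_of_continuous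
      (continuous_adjInc m0),
    (isProperMap_adjP hG0 hm0).isClosedMap.closure_image_eq_of_continuous (continuous_adjP m0)]

theorem adjP_mem_adjGraph_sinkSet [T2Space VE] [LocallyCompactSpace VE] (hG0 : IsClosed G0)
    (hm0 : ProperCont m0) {y : VF} (hyG0 : y ∉ G0) (hy : y ∈ gF.sinkSet) :
    adjP m0 y ∈ (𝒰).sinkSet := by
  rw [GraphData.sinkSet, mem_compl_iff, closure_range_adjGraph_s hG0 hm0]
  rintro (⟨x, -, hx⟩ | ⟨y', hy', hyy'⟩)
  · exact hyG0 ((adjP_eq_adjInc_iff m0).1 hx.symm).1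
  · exact hy (adjP_eq_adjP_of_notMem m0 hyG0 hyy' ▸ hy')

variable [TopologicalSpace EE] [TopologicalSpace EF]

theorem adjGraph_negInvariant_range_adjInc_iff (hpre : gF.r ⁻¹' G0 ⊆ G1) :
    (𝒰).NegInvariant (range (adjInc m0)) ↔ adjInc m0 ⁻¹' (𝒰).regSet ⊆ range gE.s := by
  constructor
  · rintro hneg x hx
    obtain ⟨ε, hsε, hrε⟩ := hneg _ ⟨mem_range_self x, hx⟩
    induction ε using induction_on with
    | inc e => exact ⟨e, adjInc_injective m0 hsε⟩
    | p e =>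
      obtain ⟨x', hx'⟩ := hrε
      obtain ⟨hre, -⟩ := (adjP_eq_adjInc_iff m0).1 hx'.symm
      obtain ⟨_, hsx⟩ := (adjP_eq_adjInc_iff m0).1 hsε
      exact ⟨m1 ⟨e, hpre hre⟩, (hF1s _).trans hsx⟩
  · rintro hreg _ ⟨⟨x, rfl⟩, hx⟩
    obtain ⟨e, rfl⟩ := hreg hx
    exact ⟨adjInc m1 e, rfl, mem_range_self _⟩

theorem preimage_adjInc_adjGraph_finSet (hG1 : IsClosed G1) (hm1 : Continuous m1) :
    adjInc m0 ⁻¹' (𝒰).finSet ⊆ gE.finSet :=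
  gE.preimage_finSet_subset (continuous_adjInc m0)
    (fun _ => (isClosedEmbedding_adjInc hG1 hm1).isCompact_preimage) fun _ => rfl

theorem preimage_adjP_adjGraph_finSet [T2Space EE] [LocallyCompactSpace EE] (hG1 : IsClosed G1)
    (hm1 : ProperCont m1) : adjP m0 ⁻¹' (𝒰).finSet ⊆ gF.finSet :=
  gF.preimage_finSet_subset (continuous_adjP m0)
    (fun _ => (isProperMap_adjP hG1 hm1).isCompact_preimage) fun _ => rfl

theorem preimage_adjInc_adjGraph_regSet_subset_regSet (hG1 : IsClosed G1) (hm1 : Continuous m1)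
    (h : adjInc m0 ⁻¹' (𝒰).regSet ⊆ range gE.s) :
    adjInc m0 ⁻¹' (𝒰).regSet ⊆ gE.regSet := by
  intro x hx
  have hopen : IsOpen (adjInc m0 ⁻¹' (𝒰).regSet) :=
    (𝒰).isOpen_regSet.preimage (continuous_adjInc m0)
  have hdisj : Disjoint gE.sinkSet (adjInc m0 ⁻¹' (𝒰).regSet) :=
    disjoint_compl_left.mono_right (h.trans subset_closure)
  exact ⟨preimage_adjInc_adjGraph_finSet hG1 hm1 hx.1,
    fun hcl => (hdisj.closure_left hopen).notMem_of_mem_left hcl hx⟩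

theorem image_adjP_singSet_subset_adjGraph_singSet [T2Space VE] [LocallyCompactSpace VE]
    [T2Space EE] [LocallyCompactSpace EE] (hG0 : IsClosed G0) (hG1 : IsClosed G1)
    (hm0 : ProperCont m0) (hm1 : ProperCont m1)
    (hF3 : m0 '' (gF.restrict G0 G1 hs hr).singSet ⊆ gE.singSet)
    (h : adjInc m0 ⁻¹' (𝒰).regSet ⊆ range gE.s) :
    adjP m0 '' gF.singSet ⊆ (𝒰).singSet := by
  rintro _ ⟨y, hy, rfl⟩ hyreg
  have hysink : y ∈ closure gF.sinkSet :=
    not_not.1 fun hcl => hy ⟨preimage_adjP_adjGraph_finSet hG1 hm1 hyreg.1, hcl⟩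
  rw [← sdiff_union_inter gF.sinkSet G0, closure_union] at hysink
  rcases hysink with hout | hin
  · exact hyreg.2 (map_mem_closure (continuous_adjP m0) hout
      fun z hz => adjP_mem_adjGraph_sinkSet hG0 hm0 hz.2 hz.1)
  · have hyG0 : y ∈ G0 := hG0.closure_subset_iff.2 inter_subset_right hin
    have hy' : (⟨y, hyG0⟩ : G0) ∈ closure (Subtype.val ⁻¹' gF.sinkSet) := by
      rwa [closure_subtype, Subtype.image_preimage_coe, inter_comm]
    have hsing : MapsTo m0 (Subtype.val ⁻¹' gF.sinkSet) gE.singSet := fun a ha =>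
      hF3 ⟨a, GraphData.sinkSet_subset_singSet _
        (gF.preimage_sinkSet_subset_restrict G0 G1 hs hr ha), rfl⟩
    rw [adjP_of_mem m0 hyG0] at hyreg
    exact gE.isClosed_singSet.closure_subset (map_mem_closure hm0.1 hy' hsing)
      (preimage_adjInc_adjGraph_regSet_subset_regSet hG1 hm1.1 h hyreg)

theorem preimage_adjInc_adjGraph_regSet_subset_range [T2Space VE] [LocallyCompactSpace VE]
    (hG0 : IsClosed G0) (hG1 : IsClosed G1) (hm0 : ProperCont m0) (hm1 : Continuous m1)
    (hEs : Continuous gE.s) (hpre : gF.r ⁻¹' G0 ⊆ G1) (hGneg : gF.NegInvariant G0)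
    (h : adjP m0 '' gF.singSet ⊆ (𝒰).singSet) :
    adjInc m0 ⁻¹' (𝒰).regSet ⊆ range gE.s := by
  intro x hx
  by_cases hxm : x ∈ range m0
  · obtain ⟨⟨y, hyG0⟩, rfl⟩ := hxm
    have hyreg : y ∈ gF.regSet := not_not.1 fun hy =>
      h ⟨y, hy, rfl⟩ (by rwa [mem_preimage, ← adjP_of_mem m0 hyG0] at hx)
    obtain ⟨e, rfl, hre⟩ := hGneg y ⟨hyG0, hyreg⟩
    exact ⟨m1 ⟨e, hpre hre⟩, hF1s _⟩
  · have hcl := (𝒰).regSet_subset_closure_range hx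
    rw [closure_range_adjGraph_s hG0 hm0] at hcl
    rcases hcl with ⟨x', hx', hxx'⟩ | ⟨y, -, hyx⟩
    · rw [adjInc_injective m0 hxx'] at hx'
      exact gE.finSet_inter_closure_range_subset hEs
        ⟨preimage_adjInc_adjGraph_finSet hG1 hm1 hx.1, hx'⟩
    · obtain ⟨_, rfl⟩ := (adjP_eq_adjInc_iff m0).1 hyx
      exact absurd (mem_range_self _) hxm

end AdjGraph

theorem adjGraph_negInvariant_iff_F3_general
    {VE EE VF EF : Type*} [TopologicalSpace VE] [TopologicalSpace EE]
    [TopologicalSpace VF] [TopologicalSpace EF]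
    [LocallyCompactSpace VE] [T2Space VE] [LocallyCompactSpace EE] [T2Space EE]
    (gE : GraphData VE EE) (gF : GraphData VF EF)
    (hE : IsTopGraph gE)
    {G0 : Set VF} {G1 : Set EF} (hG : IsClosedSubgraph gF G0 G1)
    (hpre : gF.r ⁻¹' G0 ⊆ G1)
    (m0 : G0 → VE) (m1 : G1 → EE) (hm0 : ProperCont m0) (hm1 : ProperCont m1)
    (hF1s : ∀ e : G1, gE.s (m1 e) = m0 ⟨gF.s e, hG.s_maps e.2⟩)
    (hF1r : ∀ e : G1, gE.r (m1 e) = m0 ⟨gF.r e, hG.r_maps e.2⟩)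
    (hGneg : gF.NegInvariant G0)
    (hF3 : m0 '' (gF.restrict G0 G1 hG.s_maps hG.r_maps).singSet ⊆ gE.singSet) :
    (adjGraph gE gF m0 m1 hG.s_maps hG.r_maps hF1s hF1r).NegInvariant
        (Set.range (adjInc m0)) ↔
      adjP m0 '' gF.singSet ⊆
        (adjGraph gE gF m0 m1 hG.s_maps hG.r_maps hF1s hF1r).singSet := by
  rw [adjGraph_negInvariant_range_adjInc_iff hpre]
  exact ⟨image_adjP_singSet_subset_adjGraph_singSet hG.closed0 hG.closed1 hm0 hm1 hF3,
    preimage_adjInc_adjGraph_regSet_subset_range hG.closed0 hG.closed1 hm0 hm1.1 hE.s_cont hpre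
      hGneg⟩

/-- Let `E ∪_m F` be an adjunction topological graph such that `G⁰` is negatively invariant
in `F⁰` and `m : G → E` satisfies (F3). Then `E⁰` is negatively invariant in `(E ∪_m F)⁰`
if and only if the canonical pair `p = (p¹, p⁰)` satisfies (F3), i.e.
`p⁰(F⁰_sing) ⊆ (E ∪_m F)⁰_sing`. -/
theorem adjGraph_negInvariant_iff_F3
    {VE EE VF EF : Type*} [TopologicalSpace VE] [TopologicalSpace EE]
    [TopologicalSpace VF] [TopologicalSpace EF]
    [LocallyCompactSpace VE] [T2Space VE] [LocallyCompactSpace EE] [T2Space EE]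
    [LocallyCompactSpace VF] [T2Space VF] [LocallyCompactSpace EF] [T2Space EF]
    (gE : GraphData VE EE) (gF : GraphData VF EF)
    (hE : IsTopGraph gE) (hF : IsTopGraph gF)
    {G0 : Set VF} {G1 : Set EF} (hG : IsClosedSubgraph gF G0 G1)
    (hpre : gF.r ⁻¹' G0 ⊆ G1)
    (m0 : G0 → VE) (m1 : G1 → EE) (hm0 : ProperCont m0) (hm1 : ProperCont m1)
    (hF1s : ∀ e : G1, gE.s (m1 e) = m0 ⟨gF.s e, hG.s_maps e.2⟩)
    (hF1r : ∀ e : G1, gE.r (m1 e) = m0 ⟨gF.r e, hG.r_maps e.2⟩)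
    (hGneg : gF.NegInvariant G0)
    (hF3 : m0 '' (gF.restrict G0 G1 hG.s_maps hG.r_maps).singSet ⊆ gE.singSet) :
    (adjGraph gE gF m0 m1 hG.s_maps hG.r_maps hF1s hF1r).NegInvariant
        (Set.range (adjInc m0)) ↔
      adjP m0 '' gF.singSet ⊆
        (adjGraph gE gF m0 m1 hG.s_maps hG.r_maps hF1s hF1r).singSet :=
  adjGraph_negInvariant_iff_F3_general gE gF hE hG hpre m0 m1 hm0 hm1 hF1s hF1r hGneg hF3
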